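/- The minimal elements of the poset P_𝓛 are exactly the elements a_{i,u_i+1} for those i ∈ [n] with ε_i > 1 (i.e., i = n or u_{i+1} − u_i > 1), and the maximal elements of P_𝓛 are exactly the elements a_{i,v_i} for those i ∈ [n] with θ_{i−1} > 1 (i.e., i = 1 or v_i − v_{i−1} > 1). -/

import Mathlib

namespace LadderPaper

/-- The tuple `a_{i,j}`: entry `t` is `u t` for `t < i` and `max (j + (t - i)) (u t)` for
`t ≥ i` (indices `t ∈ [1,n]`; entries outside `[1,n]` are set to `0`). -/
def atuple (u : ℕ → ℤ) (n i : ℕ) (j : ℤ) : ℕ → ℤ := fun t =>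
  if 1 ≤ t ∧ t ≤ n then
    (if t < i then u t else max (j + ((t : ℤ) - (i : ℤ))) (u t))
  else 0

/-- The tuple `b_{i,j}`: like `a_{i,j}` but with `i`-th entry `j - 1`. -/
def btuple (u : ℕ → ℤ) (n i : ℕ) (j : ℤ) : ℕ → ℤ := fun t =>
  if 1 ≤ t ∧ t ≤ n then
    (if t < i then u t
     else if t = i then j - 1
     else max (j + ((t : ℤ) - (i : ℤ))) (u t))
  else 0

/-- The tuple `(u_1, …, u_n)`. -/
def utuple (u : ℕ → ℤ) (n : ℕ) : ℕ → ℤ := fun t =>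
  if 1 ≤ t ∧ t ≤ n then u t else 0

/-- The lattice `𝓛` of tuples `c` with `u t ≤ c t ≤ v t` for `t ∈ [1,n]`, strictly
increasing entries, and (normalization) `c t = 0` outside `[1,n]`.  It carries the
componentwise (induced product) order. -/
def ladderL (n : ℕ) (u v : ℕ → ℤ) : Set (ℕ → ℤ) :=
  {c | (∀ t, 1 ≤ t → t ≤ n → u t ≤ c t ∧ c t ≤ v t) ∧
       (∀ t, 1 ≤ t → t + 1 ≤ n → c t < c (t + 1)) ∧
       (∀ t, t = 0 ∨ n < t → c t = 0)}

/-- The set `P_𝓛 = { a_{i,j} : i ∈ [n], j ∈ [u_i + 1, v_i] }`. -/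
def PL (n : ℕ) (u v : ℕ → ℤ) : Set (ℕ → ℤ) :=
  {x | ∃ i : ℕ, ∃ j : ℤ, 1 ≤ i ∧ i ≤ n ∧ u i + 1 ≤ j ∧ j ≤ v i ∧ x = atuple u n i j}

/-- The product poset `𝓛 × [r]`. -/
def ladderLr (n : ℕ) (u v : ℕ → ℤ) (r : ℤ) : Set ((ℕ → ℤ) × ℤ) :=
  {p | p.1 ∈ ladderL n u v ∧ 1 ≤ p.2 ∧ p.2 ≤ r}

/-- The set `P_{𝓛×[r]} = { (a_{i,j}, 1) } ∪ { ((u_1,…,u_n), k) : k ∈ [2,r] }`. -/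
def PLr (n : ℕ) (u v : ℕ → ℤ) (r : ℤ) : Set ((ℕ → ℤ) × ℤ) :=
  {p | (p.1 ∈ PL n u v ∧ p.2 = 1) ∨ (p.1 = utuple u n ∧ 2 ≤ p.2 ∧ p.2 ≤ r)}

/-- `ε_i > 1`, with the convention `ε_n > 1` (i.e. `i = n` or `u_{i+1} - u_i > 1`). -/
def epsGt1 (u : ℕ → ℤ) (n i : ℕ) : Prop := i = n ∨ 1 < u (i + 1) - u i

/-- `θ_{i-1} > 1`, with the convention `θ_0 > 1` (i.e. `i = 1` or `v_i - v_{i-1} > 1`). -/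
def thetaGt1 (v : ℕ → ℤ) (i : ℕ) : Prop := i = 1 ∨ 1 < v i - v (i - 1)

/-- Membership in `C = { i ∈ [n-1] : v_i < u_{i+1} } ∪ { n }`. -/
def inC (n : ℕ) (u v : ℕ → ℤ) (i : ℕ) : Prop :=
  (1 ≤ i ∧ i + 1 ≤ n ∧ v i < u (i + 1)) ∨ i = n

/-- The set `C = { i ∈ [n-1] : v_i < u_{i+1} } ∪ { n }`. -/
def Cset (n : ℕ) (u v : ℕ → ℤ) : Set ℕ :=
  {i | 1 ≤ i ∧ i + 1 ≤ n ∧ v i < u (i + 1)} ∪ {n}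

/-- `[p,q]` is one of the blocks `[p_s, q_s]` determined by `C`: `q ∈ C`,
no element of `C` lies in `[p, q-1]`, and either `p = 1` or `p - 1 ∈ C`. -/
def IsBlock (n : ℕ) (u v : ℕ → ℤ) (p q : ℕ) : Prop :=
  1 ≤ p ∧ p ≤ q ∧ q ≤ n ∧ inC n u v q ∧
    (∀ j, p ≤ j → j < q → ¬ inC n u v j) ∧ (p = 1 ∨ inC n u v (p - 1))

/-- `i0 = min { i ∈ [p,q] : ε_i > 1 }` (with the convention `ε_n > 1`). -/
def IsBlockMin (n : ℕ) (u : ℕ → ℤ) (p q i0 : ℕ) : Prop :=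
  p ≤ i0 ∧ i0 ≤ q ∧ epsGt1 u n i0 ∧ ∀ j, p ≤ j → j < i0 → ¬ epsGt1 u n j

/-- The comparability graph of a poset: two distinct elements are adjacent
iff they are comparable. -/
def compGraph (α : Type*) [Preorder α] : SimpleGraph α where
  Adj x y := x ≠ y ∧ (x ≤ y ∨ y ≤ x)
  symm := ⟨fun x y h => ⟨Ne.symm h.1, Or.symm h.2⟩⟩
  loopless := ⟨fun x h => h.1 rfl⟩

/-- A poset is pure if all of its maximal chains have the same cardinality
(equivalently, the same length). -/
def IsPure (α : Type*) [Preorder α] : Prop :=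
  ∀ A B : Set α, IsMaxChain (· ≤ ·) A → IsMaxChain (· ≤ ·) B → A.ncard = B.ncard

/-! The tuples `a_{i,j}` increase strictly in `j`, and `a_{i+1,j+1} < a_{i,j}` as soon as `j > u_i`:
both agree from entry `i + 1` on, while at entry `i` the first is `u_i`. So `a_{i,j}` is not minimal
if `j > u_i + 1` (it lies above `a_{i,j-1}`) or if `u_{i+1} = u_i + 1` (it lies above
`a_{i+1,u_{i+1}+1}`), and dually it is not maximal if `j < v_i` or `v_i = v_{i-1} + 1`.
Conversely, if `ε_i > 1` then `a_{i,u_i+1}` agrees with `u` except at entry `i`, and if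
`θ_{i-1} > 1` then no `a_{i',j'}` with `i' ≠ i` reaches `v_i` at entry `i`; either fact
forces every element comparable to the candidate to be the candidate itself. -/

section Atuple

variable {u : ℕ → ℤ} {n i t : ℕ} {j j' : ℤ}

lemma atuple_of_lt (ht : 1 ≤ t) (htn : t ≤ n) (h : t < i) : atuple u n i j t = u t := by
  simp [atuple, ht, htn, h]

lemma atuple_of_le (ht : 1 ≤ t) (htn : t ≤ n) (h : i ≤ t) :
    atuple u n i j t = max (j + (t - i)) (u t) := by
  simp [atuple, ht, htn, not_lt.2 h]

lemma atuple_self (hi : 1 ≤ i) (hin : i ≤ n) (hj : u i < j) : atuple u n i j i = j := by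
  rw [atuple_of_le hi hin le_rfl, sub_self, add_zero, max_eq_left hj.le]

lemma le_atuple (ht : 1 ≤ t) (htn : t ≤ n) : u t ≤ atuple u n i j t := by
  rcases lt_or_ge t i with h | h
  · rw [atuple_of_lt ht htn h]
  · rw [atuple_of_le ht htn h]
    exact le_max_right _ _

lemma atuple_mono (u : ℕ → ℤ) (n i : ℕ) : Monotone (atuple u n i) := by
  intro j j' hj t
  unfold atuple
  split_ifs
  · exact le_rfl
  · exact max_le_max (by gcongr) le_rfl
  · exact le_rfl

lemma atuple_lt_atuple (hi : 1 ≤ i) (hin : i ≤ n) (hjj' : j < j') (hj' : u i < j') :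
    atuple u n i j < atuple u n i j' := by
  refine Pi.lt_def.2 ⟨atuple_mono u n i hjj'.le, i, ?_⟩
  rw [atuple_self hi hin hj', atuple_of_le hi hin le_rfl, sub_self, add_zero]
  exact max_lt hjj' hj'

lemma atuple_succ_succ_le : atuple u n (i + 1) (j + 1) ≤ atuple u n i j := by
  intro t
  by_cases ht : 1 ≤ t ∧ t ≤ n
  · rcases lt_or_ge t (i + 1) with h | h
    · rw [atuple_of_lt ht.1 ht.2 h]
      exact le_atuple ht.1 ht.2
    · rw [atuple_of_le ht.1 ht.2 h, atuple_of_le ht.1 ht.2 (by omega)]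
      exact le_of_eq (by push_cast; ring_nf)
  · simp [atuple, ht]

lemma atuple_succ_succ_lt (hi : 1 ≤ i) (hin : i + 1 ≤ n) (hj : u i < j) :
    atuple u n (i + 1) (j + 1) < atuple u n i j := by
  refine Pi.lt_def.2 ⟨atuple_succ_succ_le, i, ?_⟩
  rwa [atuple_of_lt hi (by omega) (by omega), atuple_self hi (by omega) hj]

end Atuple

lemma add_sub_le_of_forall_lt_succ {w : ℕ → ℤ} {n i t : ℕ}
    (hw : ∀ k, 1 ≤ k → k + 1 ≤ n → w k < w (k + 1)) (hi : 1 ≤ i) (hit : i ≤ t) (htn : t ≤ n) :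
    w i + (t - i) ≤ w t := by
  induction t, hit using Nat.le_induction with
  | base => simp
  | succ t hit ih =>
    have := hw t (by omega) htn
    have := ih (by omega)
    push_cast
    omega

section Extremal

variable {u v : ℕ → ℤ} {n i : ℕ}

lemma atuple_add_one_apply_of_ne (humono : ∀ k, 1 ≤ k → k + 1 ≤ n → u k < u (k + 1))
    (heps : epsGt1 u n i) {t : ℕ} (ht : 1 ≤ t) (htn : t ≤ n) (hti : t ≠ i) :
    atuple u n i (u i + 1) t = u t := by
  rcases lt_or_gt_of_ne hti with h | h
  · exact atuple_of_lt ht htn h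
  · have hgap : 1 < u (i + 1) - u i := heps.resolve_left (by omega)
    have := add_sub_le_of_forall_lt_succ humono (i := i + 1) (by omega) h htn
    rw [atuple_of_le ht htn h.le, max_eq_right]
    push_cast at this
    omega

lemma atuple_apply_lt_of_ne (hvmono : ∀ k, 1 ≤ k → k + 1 ≤ n → v k < v (k + 1))
    (huv : ∀ k, 1 ≤ k → k ≤ n → u k < v k) (hθ : thetaGt1 v i) (hi : 1 ≤ i) (hin : i ≤ n)
    {i' : ℕ} {j' : ℤ} (hi' : 1 ≤ i') (hj' : j' ≤ v i') (hne : i' ≠ i) :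
    atuple u n i' j' i < v i := by
  rcases lt_or_gt_of_ne hne with h | h
  · have hgap : 1 < v i - v (i - 1) := hθ.resolve_left (by omega)
    have := add_sub_le_of_forall_lt_succ hvmono (t := i - 1) hi' (by omega) (by omega)
    rw [atuple_of_le hi hin h.le]
    refine max_lt ?_ (huv i hi hin)
    push_cast [Nat.cast_sub (by omega : 1 ≤ i)] at this
    omega
  · rw [atuple_of_lt hi hin h]
    exact huv i hi hin

lemma exists_epsGt1_of_isMin (humono : ∀ k, 1 ≤ k → k + 1 ≤ n → u k < u (k + 1))
    (huv : ∀ k, 1 ≤ k → k ≤ n → u k < v k) {x : PL n u v} (hx : IsMin x) :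
    ∃ i, 1 ≤ i ∧ i ≤ n ∧ epsGt1 u n i ∧ (x : ℕ → ℤ) = atuple u n i (u i + 1) := by
  obtain ⟨i, j, hi, hin, hij, hjv, hxij⟩ := x.2
  obtain rfl : j = u i + 1 := by
    by_contra hne
    let y : PL n u v := ⟨atuple u n i (j - 1), i, j - 1, hi, hin, by omega, by omega, rfl⟩
    refine not_isMin_of_lt (b := y) ?_ hx
    show _ < x.1
    rw [hxij]
    exact atuple_lt_atuple hi hin (by omega) (by omega)
  refine ⟨i, hi, hin, ?_, hxij⟩
  by_contra heps
  simp only [epsGt1, not_or] at heps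
  have hin' : i + 1 ≤ n := by omega
  have hu : u (i + 1) = u i + 1 := by have := humono i hi hin'; omega
  have hv := huv (i + 1) (by omega) hin'
  let y : PL n u v := ⟨atuple u n (i + 1) (u i + 1 + 1), i + 1, _, by omega, hin', by omega,
    by omega, rfl⟩
  refine not_isMin_of_lt (b := y) ?_ hx
  show _ < x.1
  rw [hxij]
  exact atuple_succ_succ_lt hi hin' (by omega)

lemma isMin_of_epsGt1 (humono : ∀ k, 1 ≤ k → k + 1 ≤ n → u k < u (k + 1))
    (hi : 1 ≤ i) (hin : i ≤ n) (heps : epsGt1 u n i) {x : PL n u v}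
    (hx : (x : ℕ → ℤ) = atuple u n i (u i + 1)) : IsMin x := by
  rintro ⟨y, i', j', hi', hi'n, hj', -, rfl⟩ (hyx : atuple u n i' j' ≤ x.1)
  obtain rfl : i = i' := by
    by_contra hne
    have : atuple u n i' j' i' ≤ x.1 i' := hyx i'
    rw [atuple_self hi' hi'n (by omega), hx,
      atuple_add_one_apply_of_ne humono heps hi' hi'n (Ne.symm hne)] at this
    omega
  have : atuple u n i j' i ≤ x.1 i := hyx i
  rw [atuple_self hi hin (by omega), hx, atuple_self hi hin (by omega)] at this
  show x.1 ≤ atuple u n i j'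
  rw [hx, show j' = u i + 1 by omega]

lemma exists_thetaGt1_of_isMax (hvmono : ∀ k, 1 ≤ k → k + 1 ≤ n → v k < v (k + 1))
    (huv : ∀ k, 1 ≤ k → k ≤ n → u k < v k) {x : PL n u v} (hx : IsMax x) :
    ∃ i, 1 ≤ i ∧ i ≤ n ∧ thetaGt1 v i ∧ (x : ℕ → ℤ) = atuple u n i (v i) := by
  obtain ⟨i, j, hi, hin, hij, hjv, hxij⟩ := x.2
  obtain rfl : j = v i := by
    by_contra hne
    let y : PL n u v := ⟨atuple u n i (j + 1), i, j + 1, hi, hin, by omega, by omega, rfl⟩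
    refine not_isMax_of_lt (b := y) ?_ hx
    show x.1 < _
    rw [hxij]
    exact atuple_lt_atuple hi hin (by omega) (by omega)
  refine ⟨i, hi, hin, ?_, hxij⟩
  by_contra hθ
  simp only [thetaGt1, not_or] at hθ
  obtain ⟨k, rfl⟩ : ∃ k, i = k + 1 := ⟨i - 1, by omega⟩
  simp only [Nat.add_sub_cancel] at hθ
  have hk : 1 ≤ k := by omega
  have hv : v (k + 1) = v k + 1 := by have := hvmono k hk hin; omega
  have hu := huv k hk (by omega)
  let y : PL n u v := ⟨atuple u n k (v k), k, v k, hk, by omega, by omega, le_rfl, rfl⟩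
  refine not_isMax_of_lt (b := y) ?_ hx
  show x.1 < _
  rw [hxij, hv]
  exact atuple_succ_succ_lt hk hin hu

lemma isMax_of_thetaGt1 (hvmono : ∀ k, 1 ≤ k → k + 1 ≤ n → v k < v (k + 1))
    (huv : ∀ k, 1 ≤ k → k ≤ n → u k < v k) (hi : 1 ≤ i) (hin : i ≤ n) (hθ : thetaGt1 v i)
    {x : PL n u v} (hx : (x : ℕ → ℤ) = atuple u n i (v i)) : IsMax x := by
  rintro ⟨y, i', j', hi', hi'n, hj', hj'v, rfl⟩ (hxy : x.1 ≤ atuple u n i' j')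
  have hxi : x.1 i ≤ atuple u n i' j' i := hxy i
  rw [hx, atuple_self hi hin (huv i hi hin)] at hxi
  obtain rfl : i = i' := by
    by_contra hne
    have := atuple_apply_lt_of_ne hvmono huv hθ hi hin hi' hj'v (Ne.symm hne)
    omega
  rw [atuple_self hi hin (by omega)] at hxi
  show atuple u n i j' ≤ x.1
  rw [hx, show j' = v i by omega]

end Extremal

theorem stmt8_general
    (n : ℕ) (u v : ℕ → ℤ)
    (humono : ∀ i, 1 ≤ i → i + 1 ≤ n → u i < u (i + 1))
    (hvmono : ∀ i, 1 ≤ i → i + 1 ≤ n → v i < v (i + 1))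
    (huv : ∀ i, 1 ≤ i → i ≤ n → u i < v i) :
    (∀ x : ↥(PL n u v),
      IsMin x ↔ ∃ i : ℕ, 1 ≤ i ∧ i ≤ n ∧ epsGt1 u n i ∧
        (x : ℕ → ℤ) = atuple u n i (u i + 1)) ∧
    (∀ x : ↥(PL n u v),
      IsMax x ↔ ∃ i : ℕ, 1 ≤ i ∧ i ≤ n ∧ thetaGt1 v i ∧
        (x : ℕ → ℤ) = atuple u n i (v i)) := by
  refine ⟨fun x => ⟨exists_epsGt1_of_isMin humono huv, ?_⟩,
    fun x => ⟨exists_thetaGt1_of_isMax hvmono huv, ?_⟩⟩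
  · rintro ⟨i, hi, hin, heps, hx⟩
    exact isMin_of_epsGt1 humono hi hin heps hx
  · rintro ⟨i, hi, hin, hθ, hx⟩
    exact isMax_of_thetaGt1 hvmono huv hi hin hθ hx

theorem stmt8
    (n m : ℕ) (u v : ℕ → ℤ)
    (hn : 1 ≤ n) (hnm : n < m)
    (hu1 : u 1 = 1)
    (humono : ∀ i, 1 ≤ i → i + 1 ≤ n → u i < u (i + 1))
    (hum : u n < (m : ℤ))
    (hv1 : 1 < v 1)
    (hvmono : ∀ i, 1 ≤ i → i + 1 ≤ n → v i < v (i + 1))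
    (hvn : v n = (m : ℤ))
    (huv : ∀ i, 1 ≤ i → i ≤ n → u i < v i)
    (hstep : ∀ i, 1 ≤ i → i + 1 ≤ n → u (i + 1) ≤ v i + 1) :
    (∀ x : ↥(PL n u v),
      IsMin x ↔ ∃ i : ℕ, 1 ≤ i ∧ i ≤ n ∧ epsGt1 u n i ∧
        (x : ℕ → ℤ) = atuple u n i (u i + 1)) ∧
    (∀ x : ↥(PL n u v),
      IsMax x ↔ ∃ i : ℕ, 1 ≤ i ∧ i ≤ n ∧ thetaGt1 v i ∧
        (x : ℕ → ℤ) = atuple u n i (v i)) :=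
  stmt8_general n u v humono hvmono huv

end LadderPaper
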